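/- arXiv:2601.17026 — 2 statements merged into one kernel-verified Lean document; each statement's English description precedes it below -/
import Mathlib

section
/- Weak duality: for any flow f and any cut S, the value of the flow is at most the capacity of the cut: |f| ≤ cap(S). -/
open Finset

variable {V : Type*} [Fintype V] [DecidableEq V]

/-- A flow on a network with capacities `c`, source `s` and sink `t`. -/
def IsFlow (c : V → V → ℝ) (s t : V) (f : V → V → ℝ) : Prop :=
  (∀ u v, f u v ≤ c u v) ∧ (∀ u v, f u v = - f v u) ∧
    ∀ v, v ≠ s → v ≠ t → ∑ u, f u v = 0

/-- The value of a flow: the net flow into the sink. -/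
def flowValue (t : V) (f : V → V → ℝ) : ℝ := ∑ v, f v t

/-- A cut: a set of vertices containing the source but not the sink. -/
def IsCut (s t : V) (S : Finset V) : Prop := s ∈ S ∧ t ∉ S

/-- The capacity of a cut. -/
def cutCap (c : V → V → ℝ) (S : Finset V) : ℝ := ∑ v ∈ S, ∑ w ∈ Sᶜ, c v w

/-- Weak duality: the value of any flow is at most the capacity of any cut. -/
theorem flowValue_le_cutCap (c : V → V → ℝ) (s t : V) (hst : s ≠ t)
    (hc : ∀ u v, 0 ≤ c u v) (f : V → V → ℝ) (hf : IsFlow c s t f)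
    (S : Finset V) (hS : IsCut s t S) :
    flowValue t f ≤ cutCap c S := by
  obtain ⟨hcap, hanti, hcons⟩ := hf
  obtain ⟨hsS, htS⟩ := hS
  have ht : t ∈ Sᶜ := Finset.mem_compl.mpr htS
  -- flowValue = sum over w in Sᶜ of total inflow
  have h1 : flowValue t f = ∑ w ∈ Sᶜ, ∑ u, f u w := by
    rw [Finset.sum_eq_single t]
    · rfl
    · intro w hw hwt
      exact hcons w (fun h => (Finset.mem_compl.mp hw) (h ▸ hsS)) hwt
    · intro h; exact absurd ht h
  -- split inner sum
  have h2 : ∀ w, (∑ u, f u w) = ∑ u ∈ S, f u w + ∑ u ∈ Sᶜ, f u w := by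
    intro w
    rw [Finset.sum_add_sum_compl]
  have h3 : ∑ w ∈ Sᶜ, ∑ u ∈ Sᶜ, f u w = 0 := by
    have hneg : ∑ w ∈ Sᶜ, ∑ u ∈ Sᶜ, f u w = -∑ w ∈ Sᶜ, ∑ u ∈ Sᶜ, f u w := by
      calc ∑ w ∈ Sᶜ, ∑ u ∈ Sᶜ, f u w
          = ∑ w ∈ Sᶜ, ∑ u ∈ Sᶜ, -f w u :=
            Finset.sum_congr rfl fun w _ => Finset.sum_congr rfl fun u _ => hanti u w
        _ = -∑ w ∈ Sᶜ, ∑ u ∈ Sᶜ, f w u := by simp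
        _ = -∑ w ∈ Sᶜ, ∑ u ∈ Sᶜ, f u w := by rw [Finset.sum_comm]
    linarith
  have h4 : flowValue t f = ∑ w ∈ Sᶜ, ∑ u ∈ S, f u w := by
    rw [h1]
    simp_rw [h2, Finset.sum_add_distrib, h3, add_zero]
  rw [h4, cutCap]
  conv_rhs => rw [Finset.sum_comm]
  exact Finset.sum_le_sum fun w _ => Finset.sum_le_sum fun u _ => hcap u w
end

section
/- If a flow f equals some cut in value, i.e. |f| = cap(S) for some cut S, then f is a maximum flow (every flow g satisfies |g| ≤ |f|) and S is a minimum cut (every cut T satisfies cap(S) ≤ cap(T)). -/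
open Finset

variable {V : Type*} [Fintype V] [DecidableEq V]

lemma pair_sum_zero (g : V → V → ℝ) (hanti : ∀ u v, g u v = - g v u)
    (A B : Finset V) (hAB : A = B) : ∑ v ∈ A, ∑ w ∈ B, g v w = 0 := by
  subst hAB
  have h1 : ∑ v ∈ A, ∑ w ∈ A, g v w = ∑ v ∈ A, ∑ w ∈ A, -(g w v) := by
    refine Finset.sum_congr rfl fun v _ => Finset.sum_congr rfl fun w _ => hanti v w
  have h2 : ∑ v ∈ A, ∑ w ∈ A, -(g w v) = -∑ v ∈ A, ∑ w ∈ A, g w v := by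
    simp
  have h3 : ∑ v ∈ A, ∑ w ∈ A, g w v = ∑ v ∈ A, ∑ w ∈ A, g v w := Finset.sum_comm
  linarith [h1, h2, h3]

lemma flow_eq_cross (c : V → V → ℝ) (s t : V) (hst : s ≠ t) (g : V → V → ℝ)
    (hg : IsFlow c s t g) (T : Finset V) (hT : IsCut s t T) :
    flowValue t g = ∑ v ∈ T, ∑ w ∈ Tᶜ, g v w := by
  obtain ⟨hcap, hanti, hcons⟩ := hg
  have row : ∀ v, v ≠ s → v ≠ t → ∑ w, g v w = 0 := by
    intro v h1 h2
    have : ∑ w, g v w = -∑ w, g w v := by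
      rw [← Finset.sum_neg_distrib]
      exact Finset.sum_congr rfl fun w _ => hanti v w
    rw [this, hcons v h1 h2, neg_zero]
  have srow : ∑ w, g s w = flowValue t g := by
    have htot : ∑ v, ∑ w, g v w = 0 := pair_sum_zero g hanti _ _ rfl
    have hsplit : ∑ v, ∑ w, g v w = ∑ w, g s w + ∑ w, g t w := by
      rw [← Finset.sum_filter_add_sum_filter_not Finset.univ (fun v => v = s ∨ v = t)]
      have h1 : Finset.filter (fun v => v = s ∨ v = t) Finset.univ = {s, t} := by
        ext v; simp [Finset.mem_insert]
      have h2 : ∑ v ∈ Finset.filter (fun v => ¬(v = s ∨ v = t)) Finset.univ,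
          ∑ w, g v w = 0 := by
        refine Finset.sum_eq_zero fun v hv => ?_
        simp only [Finset.mem_filter, not_or] at hv
        exact row v hv.2.1 hv.2.2
      rw [h1, h2, add_zero, Finset.sum_insert (by simp [hst]), Finset.sum_singleton]
    have htrow : ∑ w, g t w = -flowValue t g := by
      have : ∑ w, g t w = -∑ w, g w t := by
        rw [← Finset.sum_neg_distrib]
        exact Finset.sum_congr rfl fun w _ => hanti t w
      rw [this]; rfl
    rw [hsplit, htrow] at htot
    linarith
  have hTsum : ∑ v ∈ T, ∑ w, g v w = ∑ w, g s w := by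
    refine Finset.sum_eq_single_of_mem s hT.1 fun v _ hv => ?_
    exact row v hv (fun h => hT.2 (h ▸ ‹v ∈ T›))
  have hdecomp : ∀ v, ∑ w, g v w = ∑ w ∈ T, g v w + ∑ w ∈ Tᶜ, g v w := by
    intro v
    exact (Finset.sum_add_sum_compl T (g v)).symm
  have hTT : ∑ v ∈ T, ∑ w ∈ T, g v w = 0 := pair_sum_zero g hanti T T rfl
  calc flowValue t g = ∑ w, g s w := srow.symm
    _ = ∑ v ∈ T, ∑ w, g v w := hTsum.symm
    _ = ∑ v ∈ T, (∑ w ∈ T, g v w + ∑ w ∈ Tᶜ, g v w) :=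
        Finset.sum_congr rfl fun v _ => hdecomp v
    _ = ∑ v ∈ T, ∑ w ∈ T, g v w + ∑ v ∈ T, ∑ w ∈ Tᶜ, g v w := Finset.sum_add_distrib
    _ = ∑ v ∈ T, ∑ w ∈ Tᶜ, g v w := by rw [hTT, zero_add]

lemma flow_le_cut (c : V → V → ℝ) (s t : V) (hst : s ≠ t) (g : V → V → ℝ)
    (hg : IsFlow c s t g) (T : Finset V) (hT : IsCut s t T) :
    flowValue t g ≤ cutCap c T := by
  rw [flow_eq_cross c s t hst g hg T hT]
  exact Finset.sum_le_sum fun v _ => Finset.sum_le_sum fun w _ => hg.1 v w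

/-- If a flow's value equals the capacity of some cut, then the flow is a
maximum flow and the cut is a minimum cut. -/
theorem maxflow_mincut_of_eq (c : V → V → ℝ) (s t : V) (hst : s ≠ t)
    (hc : ∀ u v, 0 ≤ c u v) (f : V → V → ℝ) (hf : IsFlow c s t f)
    (S : Finset V) (hS : IsCut s t S) (heq : flowValue t f = cutCap c S) :
    (∀ g, IsFlow c s t g → flowValue t g ≤ flowValue t f) ∧
    (∀ T, IsCut s t T → cutCap c S ≤ cutCap c T) := by
  constructor
  · intro g hg
    rw [heq]
    exact flow_le_cut c s t hst g hg S hS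
  · intro T hT
    rw [← heq]
    exact flow_le_cut c s t hst f hf T hT
end
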